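/- arXiv:2506.12595 — 2 statements merged into one kernel-verified Lean document; each statement's English description precedes it below -/
import Mathlib

section
/- Let Ext : ({0,1}^n)³ → {0,1}^m be a three-source extractor for min-entropy k with error ε that is leakage-resilient against NOF protocols with μ ≥ 1 bits of communication among 3 parties. Define Ext' : ({0,1}^n)^N → {0,1}^m for N ≥ 3 by Ext'(x₁,...,x_N) = XOR over all triples {i,j,l} ⊆ [N] of Ext(x_i, x_j, x_l). If additionally the leakage resilience of Ext holds with the stronger guarantee that (Ext(X), Π(X)) is ε-close to (U_m, Π(X)) for leakage Π of length μ ≥ m·binom(N,3), then Ext' is an extractor for (N, 3, n, k)-adversarial sources with error ε. -/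
open Finset

structure FDist (α : Type) [Fintype α] where
  pmf : α → ℝ
  nonneg : ∀ a, 0 ≤ pmf a
  sum_one : ∑ a, pmf a = 1

namespace FDist

variable {α β : Type} [Fintype α] [Fintype β]

noncomputable def map [DecidableEq β] (f : α → β) (P : FDist α) : FDist β where
  pmf b := ∑ a ∈ Finset.univ.filter (fun a => f a = b), P.pmf a
  nonneg _ := Finset.sum_nonneg fun a _ => P.nonneg a
  sum_one := by
    rw [← P.sum_one]
    exact Finset.sum_fiberwise_of_maps_to (fun a _ => Finset.mem_univ (f a)) _

noncomputable def uniform (α : Type) [Fintype α] [Nonempty α] : FDist α where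
  pmf _ := (Fintype.card α : ℝ)⁻¹
  nonneg _ := by positivity
  sum_one := by
    rw [Finset.sum_const, Finset.card_univ, nsmul_eq_mul,
      mul_inv_cancel₀ (Nat.cast_ne_zero.mpr Fintype.card_ne_zero)]

noncomputable def prod (P : FDist α) (Q : FDist β) : FDist (α × β) where
  pmf p := P.pmf p.1 * Q.pmf p.2
  nonneg p := mul_nonneg (P.nonneg _) (Q.nonneg _)
  sum_one := by
    rw [Fintype.sum_prod_type]
    simp_rw [← Finset.mul_sum, Q.sum_one, mul_one, P.sum_one]

noncomputable def pi {N : ℕ} {A : Fin N → Type} [∀ i, Fintype (A i)]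
    (P : ∀ i, FDist (A i)) : FDist (∀ i, A i) where
  pmf x := ∏ i, (P i).pmf (x i)
  nonneg x := Finset.prod_nonneg fun i _ => (P i).nonneg _
  sum_one := by
    classical
    rw [← Fintype.piFinset_univ, ← Finset.prod_univ_sum]
    exact Finset.prod_eq_one fun i _ => (P i).sum_one

noncomputable def sd (P Q : FDist α) : ℝ := (∑ a, |P.pmf a - Q.pmf a|) / 2

def minEntropyGe (P : FDist α) (k : ℝ) : Prop := ∀ a, P.pmf a ≤ (2:ℝ) ^ (-k)

def prob (P : FDist α) (S : Finset α) : ℝ := ∑ a ∈ S, P.pmf a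

end FDist


/-- An NOF protocol: each transcript bit `t` is written by some party `party t`,
and depends only on the inputs on the other parties' foreheads and the previous bits. -/
def IsNOFProtocol {n N mu : ℕ}
    (Pi : (Fin N → (Fin n → ZMod 2)) → (Fin mu → ZMod 2)) : Prop :=
  ∃ party : Fin mu → Fin N,
    ∀ (t : Fin mu) (x y : Fin N → (Fin n → ZMod 2)),
      (∀ i, i ≠ party t → x i = y i) →
      (∀ s : Fin mu, s < t → Pi x s = Pi y s) →
      Pi x t = Pi y t

/-- A leakage-resilient extractor against NOF protocols with `mu` bits of
communication, min-entropy `k` and error `ε`. -/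
def IsLRE (n N m mu : ℕ) (k ε : ℝ)
    (Ext : (Fin N → (Fin n → ZMod 2)) → (Fin m → ZMod 2)) : Prop :=
  ∀ Pi : (Fin N → (Fin n → ZMod 2)) → (Fin mu → ZMod 2), IsNOFProtocol Pi →
    ∀ X : Fin N → FDist (Fin n → ZMod 2), (∀ i, (X i).minEntropyGe k) →
      FDist.sd (FDist.map (fun x => (Ext x, Pi x)) (FDist.pi X))
        (FDist.map (fun p => (p.1, Pi p.2))
          ((FDist.uniform (Fin m → ZMod 2)).prod (FDist.pi X))) ≤ ε

/-!
Fix three sources `X i, X j, X l` of min-entropy `k` and condition on the values `z` of all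
the others: resampling coordinates `i, j, l` of a product distribution independently leaves it
unchanged, and statistical distance to uniform is convex, so it suffices to treat each `z`
separately. For fixed `z` the XOR splits as `Ext (x i, x j, x l)` plus the terms of all other
triples, each of which misses one of `i, j, l` and can therefore be written on the board by that
party. All these `m · binom(N,3)` bits together form an NOF leak, so leakage resilience makes
`Ext` uniform even given them, and adding a function of the leak to a uniform string keeps it
uniform.
-/

open Function

namespace FDist

variable {α β γ : Type} [Fintype α] [Fintype β] [Fintype γ]

@[ext]
theorem ext {P Q : FDist α} (h : ∀ a, P.pmf a = Q.pmf a) : P = Q := by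
  cases P; cases Q; congr 1; exact funext h

theorem map_pmf [DecidableEq β] (f : α → β) (P : FDist α) (b : β) :
    (map f P).pmf b = ∑ a, if f a = b then P.pmf a else 0 := by
  simp [map, Finset.sum_filter]

theorem map_map [DecidableEq β] [DecidableEq γ] (f : α → β) (g : β → γ) (P : FDist α) :
    map g (map f P) = map (fun a => g (f a)) P := by
  ext c
  simp only [map_pmf, ← Finset.sum_filter]
  rw [← Finset.sum_fiberwise_of_maps_to (g := f) (t := univ.filter fun b => g b = c)
    (fun a ha => by simpa using ha)]
  refine Finset.sum_congr rfl fun b hb => ?_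
  rw [Finset.filter_filter]
  congr 1
  ext a
  simp only [mem_filter, mem_univ, true_and] at hb ⊢
  constructor
  · rintro rfl; exact ⟨hb, rfl⟩
  · exact And.right

theorem sd_map_le [DecidableEq β] (g : α → β) (P Q : FDist α) :
    sd (map g P) (map g Q) ≤ sd P Q := by
  unfold sd
  gcongr ?_ / 2
  calc ∑ b, |(map g P).pmf b - (map g Q).pmf b|
      ≤ ∑ b, ∑ a ∈ univ.filter (fun a => g a = b), |P.pmf a - Q.pmf a| := by
        gcongr with b
        simp only [map, ← Finset.sum_sub_distrib]
        exact Finset.abs_sum_le_sum_abs _ _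
    _ = ∑ a, |P.pmf a - Q.pmf a| :=
        Finset.sum_fiberwise_of_maps_to (fun a _ => Finset.mem_univ (g a)) _

theorem map_prod_pmf [DecidableEq γ] (g : α × β → γ) (P : FDist α) (Q : FDist β) (c : γ) :
    (map g (P.prod Q)).pmf c = ∑ a, P.pmf a * (map (fun b => g (a, b)) Q).pmf c := by
  simp only [map_pmf, Fintype.sum_prod_type, Finset.mul_sum, prod]
  refine Finset.sum_congr rfl fun a _ => Finset.sum_congr rfl fun b _ => ?_
  split_ifs <;> simp

theorem sd_map_prod_le [DecidableEq γ] {g : α × β → γ} {P : FDist α} {Q : FDist β}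
    {R : FDist γ} {ε : ℝ} (h : ∀ a, sd (map (fun b => g (a, b)) Q) R ≤ ε) :
    sd (map g (P.prod Q)) R ≤ ε := by
  set K := fun a => map (fun b => g (a, b)) Q
  have hpt : ∀ c, |(map g (P.prod Q)).pmf c - R.pmf c|
      ≤ ∑ a, P.pmf a * |(K a).pmf c - R.pmf c| := fun c => by
    calc |(map g (P.prod Q)).pmf c - R.pmf c|
        = |∑ a, P.pmf a * ((K a).pmf c - R.pmf c)| := by
          simp only [map_prod_pmf, mul_sub, Finset.sum_sub_distrib, ← Finset.sum_mul,
            P.sum_one, one_mul, K]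
      _ ≤ ∑ a, |P.pmf a * ((K a).pmf c - R.pmf c)| := Finset.abs_sum_le_sum_abs _ _
      _ = ∑ a, P.pmf a * |(K a).pmf c - R.pmf c| := by
          simp only [abs_mul, abs_of_nonneg (P.nonneg _)]
  calc sd (map g (P.prod Q)) R ≤ ∑ a, P.pmf a * sd (K a) R := by
        simp only [sd, mul_div_assoc', Finset.mul_sum, ← Finset.sum_div]
        rw [Finset.sum_comm]
        gcongr with c
        exact hpt c
    _ ≤ ∑ a, P.pmf a * ε := by gcongr with a; exacts [P.nonneg a, h a]
    _ = ε := by rw [← Finset.sum_mul, P.sum_one, one_mul]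

theorem map_add_uniform {G : Type} [Fintype G] [Nonempty G] [AddGroup G] [DecidableEq G]
    (h : β → G) (Q : FDist β) :
    map (fun p : G × β => p.1 + h p.2) ((uniform G).prod Q) = uniform G := by
  ext c
  simp only [map_pmf, Fintype.sum_prod_type_right, prod, uniform, ← eq_sub_iff_add_eq,
    Finset.sum_ite_eq', mem_univ, if_true, ← Finset.mul_sum, Q.sum_one, mul_one]

end FDist

theorem Finset.prod_univ_eq_prod_comp_mul_prod_compl {ι κ M : Type} [Fintype ι] [Fintype κ]
    [DecidableEq κ] [CommMonoid M] {v : ι → κ} (hv : Injective v) (g : κ → M) :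
    ∏ r, g r = (∏ t, g (v t)) * ∏ r ∈ (univ.image v)ᶜ, g r := by
  rw [← prod_mul_prod_compl (univ.image v), prod_image fun _ _ _ _ h => hv h]

theorem Function.extend_apply_eq_of_ne {ι κ α : Type} {v : ι → κ} (hv : Injective v)
    {w w' : ι → α} (z : κ → α) {t : ι} (hw : ∀ s, s ≠ t → w s = w' s) {r : κ}
    (hr : r ≠ v t) :
    extend v w z r = extend v w' z r := by
  by_cases h : ∃ s, v s = r
  · obtain ⟨s, rfl⟩ := h
    rw [hv.extend_apply, hv.extend_apply]
    exact hw s (by rintro rfl; exact hr rfl)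
  · rw [extend_apply' _ _ _ h, extend_apply' _ _ _ h]

namespace FDist

variable {α : Type} [Fintype α] {K N : ℕ}

theorem pi_pmf_extend_mul (X : Fin N → FDist α) {v : Fin K → Fin N} (hv : Injective v)
    (z : Fin N → α) (w : Fin K → α) :
    (pi X).pmf (extend v w z) * (pi fun t => X (v t)).pmf (z ∘ v)
      = (pi X).pmf z * (pi fun t => X (v t)).pmf w := by
  classical
  have hcompl : ∀ r ∈ (univ.image v)ᶜ, (X r).pmf (extend v w z r) = (X r).pmf (z r) := by
    intro r hr
    rw [extend_apply' _ _ _ (by simpa using hr)]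
  simp only [pi, prod_univ_eq_prod_comp_mul_prod_compl hv, hv.extend_apply,
    prod_congr rfl hcompl, comp_apply]
  ring

theorem map_extend_prod_pi [DecidableEq α] (X : Fin N → FDist α) {v : Fin K → Fin N}
    (hv : Injective v) :
    map (fun p => extend v p.2 p.1) ((pi X).prod (pi fun t => X (v t))) = pi X := by
  ext x
  set Φ : (Fin N → α) × (Fin K → α) → (Fin N → α) × (Fin K → α) :=
    fun p => (extend v p.2 p.1, p.1 ∘ v)
  have hΦ : Involutive Φ := by
    rintro ⟨z, w⟩
    refine Prod.ext (funext fun r => ?_) (extend_comp hv w z)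
    by_cases h : ∃ t, v t = r
    · obtain ⟨t, rfl⟩ := h
      simp only [Φ, hv.extend_apply, comp_apply]
    · simp only [Φ, extend_apply' _ _ _ h]
  calc (map (fun p => extend v p.2 p.1) ((pi X).prod (pi fun t => X (v t)))).pmf x
      = ∑ p, if (Φ p).1 = x then (pi X).pmf p.1 * (pi fun t => X (v t)).pmf p.2 else 0 :=
        map_pmf _ _ _
    _ = ∑ p : (Fin N → α) × (Fin K → α),
          if p.1 = x then (pi X).pmf p.1 * (pi fun t => X (v t)).pmf p.2 else 0 := by
        rw [← Equiv.sum_comp (hΦ.toPerm Φ)]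
        simp only [Involutive.coe_toPerm, hΦ _]
        simp only [Φ, pi_pmf_extend_mul X hv]
    _ = (pi X).pmf x := by
        simp only [Fintype.sum_prod_type, sum_ite_irrel, ← mul_sum, sum_const_zero, sum_ite_eq',
          mem_univ, if_true, sum_one, mul_one]

end FDist

theorem exists_isNOFProtocol_sum {n N m mu : ℕ} [NeZero N] {ι : Type} [Fintype ι]
    (F : ι → (Fin N → Fin n → ZMod 2) → Fin m → ZMod 2) (party : ι → Fin N)
    (hF : ∀ q x y, (∀ s, s ≠ party q → x s = y s) → F q x = F q y)
    (hcard : Fintype.card ι * m ≤ mu) :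
    ∃ (Pi : (Fin N → Fin n → ZMod 2) → Fin mu → ZMod 2)
      (dec : (Fin mu → ZMod 2) → Fin m → ZMod 2),
      IsNOFProtocol Pi ∧ ∀ x, dec (Pi x) = ∑ q, F q x := by
  obtain ⟨e⟩ : Nonempty (ι × Fin m ↪ Fin mu) :=
    Function.Embedding.nonempty_of_card_le (by simpa using hcard)
  refine ⟨fun x => extend e (fun q => F q.1 x q.2) 0, fun π r => ∑ q, π (e (q, r)),
    ⟨extend e (fun q => party q.1) 0, fun t x y hxy _ => ?_⟩, fun x => ?_⟩
  · by_cases ht : ∃ q, e q = t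
    · obtain ⟨q, rfl⟩ := ht
      simp only [e.injective.extend_apply] at hxy ⊢
      exact congrFun (hF q.1 x y hxy) q.2
    · simp only [extend_apply' _ _ _ ht]
  · funext r
    simp only [e.injective.extend_apply, Finset.sum_apply]

theorem IsLRE.sd_map_add_le {n N m mu : ℕ} {k ε : ℝ}
    {Ext : (Fin N → Fin n → ZMod 2) → Fin m → ZMod 2} (hExt : IsLRE n N m mu k ε Ext)
    {Pi : (Fin N → Fin n → ZMod 2) → Fin mu → ZMod 2} (hPi : IsNOFProtocol Pi)
    (dec : (Fin mu → ZMod 2) → Fin m → ZMod 2) {Y : Fin N → FDist (Fin n → ZMod 2)}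
    (hY : ∀ i, (Y i).minEntropyGe k) :
    FDist.sd (FDist.map (fun y => Ext y + dec (Pi y)) (FDist.pi Y))
      (FDist.uniform (Fin m → ZMod 2)) ≤ ε := by
  have h := (FDist.sd_map_le (fun p => p.1 + dec p.2) _ _).trans (hExt Pi hPi Y hY)
  rwa [FDist.map_map, FDist.map_map, FDist.map_add_uniform (fun y => dec (Pi y))] at h

def sortedTriples (N : ℕ) : Finset (Fin N × Fin N × Fin N) :=
  univ.filter fun p => p.1 < p.2.1 ∧ p.2.1 < p.2.2

theorem mem_sortedTriples {N : ℕ} {p : Fin N × Fin N × Fin N} :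
    p ∈ sortedTriples N ↔ p.1 < p.2.1 ∧ p.2.1 < p.2.2 := by
  simp [sortedTriples]

theorem eq_of_mem_sortedTriples {N : ℕ} {p q : Fin N × Fin N × Fin N}
    (hp : p ∈ sortedTriples N) (hq : q ∈ sortedTriples N)
    (h : ∀ t, ![q.1, q.2.1, q.2.2] t ∈ ({p.1, p.2.1, p.2.2} : Finset (Fin N))) : q = p := by
  obtain ⟨a, b, c⟩ := p
  obtain ⟨a', b', c'⟩ := q
  have h0 := h 0
  have h1 := h 1
  have h2 := h 2
  simp only [mem_sortedTriples] at hp hq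
  simp only [Matrix.cons_val, mem_insert, mem_singleton] at h0 h1 h2
  simp only [Prod.mk.injEq, Fin.ext_iff, Fin.lt_def] at *
  omega

theorem card_sortedTriples_le (N : ℕ) : #(sortedTriples N) ≤ N.choose 3 := by
  classical
  calc #(sortedTriples N) ≤ #(powersetCard 3 (univ : Finset (Fin N))) := by
        refine card_le_card_of_injOn (fun p => {p.1, p.2.1, p.2.2}) (fun p hp => ?_)
          (fun p hp q hq hpq => ?_)
        · rw [mem_coe, mem_sortedTriples] at hp
          simp only [mem_coe, mem_powersetCard_univ]
          exact card_eq_three.mpr ⟨_, _, _, hp.1.ne, (hp.1.trans hp.2).ne, hp.2.ne, rfl⟩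
        · refine eq_of_mem_sortedTriples hq hp fun t => ?_
          rw [← show ({p.1, p.2.1, p.2.2} : Finset (Fin N)) = {q.1, q.2.1, q.2.2} from hpq]
          fin_cases t <;> simp
    _ = N.choose 3 := by simp

theorem exists_notMem_of_ne_of_mem_sortedTriples {N : ℕ} {p q : Fin N × Fin N × Fin N}
    (hp : p ∈ sortedTriples N) (hq : q ∈ sortedTriples N) (hne : p ≠ q) :
    ∃ t, ![q.1, q.2.1, q.2.2] t ∉ ({p.1, p.2.1, p.2.2} : Finset (Fin N)) := by
  by_contra! h
  exact hne (eq_of_mem_sortedTriples hp hq h).symm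

theorem exists_lt_lt_of_ne {α : Type} [LinearOrder α] {P : α → Prop} {i j l : α}
    (hij : i ≠ j) (hil : i ≠ l) (hjl : j ≠ l) (hi : P i) (hj : P j) (hl : P l) :
    ∃ a b c, a < b ∧ b < c ∧ P a ∧ P b ∧ P c := by
  set s : Finset α := {i, j, l}
  have hs : #s = 3 := card_eq_three.mpr ⟨i, j, l, hij, hil, hjl, rfl⟩
  have hP : ∀ x ∈ s, P x := by simp [s, hi, hj, hl]
  set f := s.orderEmbOfFin hs
  exact ⟨f 0, f 1, f 2, f.strictMono (by decide), f.strictMono (by decide),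
    hP _ (s.orderEmbOfFin_mem hs 0), hP _ (s.orderEmbOfFin_mem hs 1),
    hP _ (s.orderEmbOfFin_mem hs 2)⟩

theorem injective_vecCons_of_lt {α : Type} [Preorder α] {i j l : α} (hij : i < j)
    (hjl : j < l) : Injective ![i, j, l] :=
  (Fin.strictMono_iff_lt_succ.mpr fun t => by fin_cases t; exacts [hij, hjl]).injective

theorem sd_map_sum_sortedTriples_extend_le {n N m mu : ℕ} {k ε : ℝ}
    (hmu : m * N.choose 3 ≤ mu) {Ext : (Fin 3 → Fin n → ZMod 2) → Fin m → ZMod 2}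
    (hExt : IsLRE n 3 m mu k ε Ext) (X : Fin N → FDist (Fin n → ZMod 2)) {i j l : Fin N}
    (hij : i < j) (hjl : j < l)
    (hi : (X i).minEntropyGe k) (hj : (X j).minEntropyGe k) (hl : (X l).minEntropyGe k)
    (z : Fin N → Fin n → ZMod 2) :
    FDist.sd (FDist.map (fun w => ∑ p ∈ sortedTriples N, Ext ![extend ![i, j, l] w z p.1,
        extend ![i, j, l] w z p.2.1, extend ![i, j, l] w z p.2.2])
      (FDist.pi fun t => X (![i, j, l] t))) (FDist.uniform (Fin m → ZMod 2)) ≤ ε := by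
  set v : Fin 3 → Fin N := ![i, j, l]
  have hv : Injective v := injective_vecCons_of_lt hij hjl
  have hp₀ : (i, j, l) ∈ sortedTriples N := mem_sortedTriples.mpr ⟨hij, hjl⟩
  set S := (sortedTriples N).erase (i, j, l)
  have hmiss : ∀ p : S, ∃ t, v t ∉ ({p.1.1, p.1.2.1, p.1.2.2} : Finset (Fin N)) := fun p =>
    exists_notMem_of_ne_of_mem_sortedTriples (mem_of_mem_erase p.2) hp₀ (ne_of_mem_erase p.2)
  choose party hparty using hmiss
  have hleak : ∀ (p : S) w w', (∀ s, s ≠ party p → w s = w' s) →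
      Ext ![extend v w z p.1.1, extend v w z p.1.2.1, extend v w z p.1.2.2]
        = Ext ![extend v w' z p.1.1, extend v w' z p.1.2.1, extend v w' z p.1.2.2] := by
    intro p w w' hw
    have hr := hparty p
    simp only [mem_insert, mem_singleton, not_or] at hr
    rw [extend_apply_eq_of_ne hv z hw (Ne.symm hr.1),
      extend_apply_eq_of_ne hv z hw (Ne.symm hr.2.1),
      extend_apply_eq_of_ne hv z hw (Ne.symm hr.2.2)]
  have hcard : Fintype.card S * m ≤ mu := by
    rw [Fintype.card_coe, mul_comm]
    exact (Nat.mul_le_mul_left m (card_erase_le.trans (card_sortedTriples_le N))).trans hmu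
  obtain ⟨Pi, dec, hPi, hdec⟩ := exists_isNOFProtocol_sum _ party hleak hcard
  have hsplit : ∀ w, ∑ p ∈ sortedTriples N,
      Ext ![extend v w z p.1, extend v w z p.2.1, extend v w z p.2.2] = Ext w + dec (Pi w) := by
    intro w
    rw [hdec, ← add_sum_erase _ _ hp₀, sum_coe_sort S (fun p =>
      Ext ![extend v w z p.1, extend v w z p.2.1, extend v w z p.2.2])]
    congr 2
    funext t
    fin_cases t
    exacts [hv.extend_apply w z 0, hv.extend_apply w z 1, hv.extend_apply w z 2]
  simp only [hsplit]
  refine hExt.sd_map_add_le hPi dec fun t => ?_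
  fin_cases t <;> assumption

theorem sd_map_sum_sortedTriples_le {n N m mu : ℕ} {k ε : ℝ} (hmu : m * N.choose 3 ≤ mu)
    {Ext : (Fin 3 → Fin n → ZMod 2) → Fin m → ZMod 2} (hExt : IsLRE n 3 m mu k ε Ext)
    (X : Fin N → FDist (Fin n → ZMod 2)) {i j l : Fin N} (hij : i < j) (hjl : j < l)
    (hi : (X i).minEntropyGe k) (hj : (X j).minEntropyGe k) (hl : (X l).minEntropyGe k) :
    FDist.sd (FDist.map (fun x => ∑ p ∈ sortedTriples N, Ext ![x p.1, x p.2.1, x p.2.2])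
      (FDist.pi X)) (FDist.uniform (Fin m → ZMod 2)) ≤ ε := by
  rw [← FDist.map_extend_prod_pi X (injective_vecCons_of_lt hij hjl), FDist.map_map]
  exact FDist.sd_map_prod_le (sd_map_sum_sortedTriples_extend_le hmu hExt X hij hjl hi hj hl)

theorem stmt15_general (n N m mu : ℕ) (k ε : ℝ)
    (hmu' : m * Nat.choose N 3 ≤ mu)
    (Ext : (Fin 3 → (Fin n → ZMod 2)) → (Fin m → ZMod 2))
    (hLRE : IsLRE n 3 m mu k ε Ext)
    (X : Fin N → FDist (Fin n → ZMod 2))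
    (i j l : Fin N) (hij : i ≠ j) (hil : i ≠ l) (hjl : j ≠ l)
    (hi : (X i).minEntropyGe k) (hj : (X j).minEntropyGe k)
    (hl : (X l).minEntropyGe k) :
    FDist.sd
      (FDist.map
        (fun x => ∑ p ∈ Finset.univ.filter
            (fun p : Fin N × Fin N × Fin N => p.1 < p.2.1 ∧ p.2.1 < p.2.2),
          Ext ![x p.1, x p.2.1, x p.2.2])
        (FDist.pi X))
      (FDist.uniform (Fin m → ZMod 2)) ≤ ε := by
  obtain ⟨a, b, c, hab, hbc, ha, hb, hc⟩ :=
    exists_lt_lt_of_ne (P := fun r => (X r).minEntropyGe k) hij hil hjl hi hj hl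
  exact sd_map_sum_sortedTriples_le hmu' hLRE X hab hbc ha hb hc

theorem stmt15 (n N m mu : ℕ) (k ε : ℝ) (hN : 3 ≤ N) (hmu : 1 ≤ mu)
    (hmu' : m * Nat.choose N 3 ≤ mu)
    (Ext : (Fin 3 → (Fin n → ZMod 2)) → (Fin m → ZMod 2))
    (hext : ∀ Y : Fin 3 → FDist (Fin n → ZMod 2), (∀ i, (Y i).minEntropyGe k) →
      FDist.sd (FDist.map Ext (FDist.pi Y)) (FDist.uniform (Fin m → ZMod 2)) ≤ ε)
    (hLRE : IsLRE n 3 m mu k ε Ext)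
    (X : Fin N → FDist (Fin n → ZMod 2))
    (i j l : Fin N) (hij : i ≠ j) (hil : i ≠ l) (hjl : j ≠ l)
    (hi : (X i).minEntropyGe k) (hj : (X j).minEntropyGe k)
    (hl : (X l).minEntropyGe k) :
    FDist.sd
      (FDist.map
        (fun x => ∑ p ∈ Finset.univ.filter
            (fun p : Fin N × Fin N × Fin N => p.1 < p.2.1 ∧ p.2.1 < p.2.2),
          Ext ![x p.1, x p.2.1, x p.2.2])
        (FDist.pi X))
      (FDist.uniform (Fin m → ZMod 2)) ≤ ε :=
  stmt15_general n N m mu k ε hmu' Ext hLRE X i j l hij hil hjl hi hj hl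
end

section
/- The inner-product function is a two-source extractor: for IP : F₂^n × F₂^n → F₂ given by IP(x,y) = ⟨x,y⟩ mod 2, and any two independent sources X, Y on F₂^n with H_∞(X) ≥ k₁ and H_∞(Y) ≥ k₂ satisfying k₁ + k₂ ≥ n + 2 + 2log₂(1/ε), the output IP(X,Y) is ε-close to a uniform bit. -/
open Finset

/-! Write `χ(b) = (-1)^b`. The statistical distance of a bit from uniform is half its bias
`|E χ(⟨X, Y⟩)|`. Cauchy–Schwarz in `x`, followed by Parseval for the Walsh–Hadamard transform
(the characters `x ↦ χ(⟨x, y⟩)` are orthogonal of squared norm `2^n`), bounds the squared bias by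
`2^n ‖X‖₂² ‖Y‖₂²` (Lindsey's lemma), and min-entropy `k` bounds the collision probability
`‖P‖₂²` by `2^(-k)`. Hence the squared bias is at most `2^(n - k₁ - k₂) ≤ (ε/2)²`. -/

open Matrix

namespace AddChar

lemma map_sum_eq_prod {ι A M : Type*} [AddCommMonoid A] [CommMonoid M] (ψ : AddChar A M)
    (s : Finset ι) (f : ι → A) : ψ (∑ i ∈ s, f i) = ∏ i ∈ s, ψ (f i) := by
  induction s using Finset.cons_induction with
  | empty => simp
  | cons a s ha ih => rw [Finset.sum_cons, Finset.prod_cons, map_add_eq_mul, ih]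

end AddChar

noncomputable def signChar : AddChar (ZMod 2) ℝ := AddChar.zmodChar 2 (ζ := -1) (by norm_num)

@[simp] lemma signChar_one : signChar 1 = -1 := by
  simp [signChar, AddChar.zmodChar_apply, ZMod.val_one]

lemma sum_zmod_two {M : Type*} [AddCommMonoid M] (f : ZMod 2 → M) : ∑ b, f b = f 0 + f 1 :=
  Fin.sum_univ_two f

section WalshHadamard

variable {n : ℕ}

lemma sum_signChar_dotProduct (z : Fin n → ZMod 2) :
    ∑ x : Fin n → ZMod 2, signChar (x ⬝ᵥ z) = if z = 0 then 2 ^ n else 0 := by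
  have hcoord (w : ZMod 2) : ∑ b, signChar (b * w) = if w = 0 then 2 else 0 := by
    rw [sum_zmod_two, zero_mul, one_mul, AddChar.map_zero_eq_one]
    obtain rfl | rfl : w = 0 ∨ w = 1 := by revert w; decide
    · norm_num
    · simp
  simp_rw [dotProduct, AddChar.map_sum_eq_prod]
  rw [← Fintype.prod_sum fun i b => signChar (b * z i)]
  simp_rw [hcoord]
  rw [Finset.prod_ite_zero]
  simp [funext_iff]

lemma sum_signChar_dotProduct_mul (y y' : Fin n → ZMod 2) :
    ∑ x : Fin n → ZMod 2, signChar (x ⬝ᵥ y) * signChar (x ⬝ᵥ y') =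
      if y = y' then 2 ^ n else 0 := by
  have hneg : -y' = y' := funext fun i => ZMod.neg_eq_self_mod_two (y' i)
  simp_rw [← AddChar.map_add_eq_mul, ← dotProduct_add, sum_signChar_dotProduct,
    add_eq_zero_iff_eq_neg, hneg]

lemma sum_sq_sum_mul_signChar_dotProduct (g : (Fin n → ZMod 2) → ℝ) :
    ∑ x, (∑ y, g y * signChar (x ⬝ᵥ y)) ^ 2 = 2 ^ n * ∑ y, g y ^ 2 := by
  calc ∑ x, (∑ y, g y * signChar (x ⬝ᵥ y)) ^ 2
      = ∑ y, ∑ y', g y * g y' * ∑ x, signChar (x ⬝ᵥ y) * signChar (x ⬝ᵥ y') := by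
        simp_rw [sq, Finset.sum_mul_sum, Finset.mul_sum]
        rw [Finset.sum_comm]
        refine Finset.sum_congr rfl fun y _ => ?_
        rw [Finset.sum_comm]
        exact Finset.sum_congr rfl fun y' _ => Finset.sum_congr rfl fun x _ => by ring
    _ = 2 ^ n * ∑ y, g y ^ 2 := by
        simp_rw [sum_signChar_dotProduct_mul, mul_ite, mul_zero, Finset.sum_ite_eq,
          Finset.mem_univ, if_true, Finset.mul_sum]
        exact Finset.sum_congr rfl fun y _ => by ring

lemma sq_sum_mul_signChar_dotProduct_le (f g : (Fin n → ZMod 2) → ℝ) :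
    (∑ x, ∑ y, f x * g y * signChar (x ⬝ᵥ y)) ^ 2 ≤
      2 ^ n * (∑ x, f x ^ 2) * ∑ y, g y ^ 2 :=
  calc (∑ x, ∑ y, f x * g y * signChar (x ⬝ᵥ y)) ^ 2
      = (∑ x, f x * ∑ y, g y * signChar (x ⬝ᵥ y)) ^ 2 := by
        simp_rw [Finset.mul_sum, mul_assoc]
    _ ≤ (∑ x, f x ^ 2) * ∑ x, (∑ y, g y * signChar (x ⬝ᵥ y)) ^ 2 :=
        Finset.sum_mul_sq_le_sq_mul_sq _ _ _
    _ = 2 ^ n * (∑ x, f x ^ 2) * ∑ y, g y ^ 2 := by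
        rw [sum_sq_sum_mul_signChar_dotProduct]; ring

end WalshHadamard

namespace FDist

variable {α β : Type} [Fintype α] [Fintype β]

lemma sum_sq_le_of_minEntropyGe {P : FDist α} {k : ℝ} (h : P.minEntropyGe k) :
    ∑ a, P.pmf a ^ 2 ≤ 2 ^ (-k) :=
  calc ∑ a, P.pmf a ^ 2 ≤ ∑ a, 2 ^ (-k) * P.pmf a :=
        Finset.sum_le_sum fun a _ => by
          rw [sq]; exact mul_le_mul_of_nonneg_right (h a) (P.nonneg a)
    _ = 2 ^ (-k) := by rw [← Finset.mul_sum, P.sum_one, mul_one]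

lemma sum_map_mul [DecidableEq β] (f : α → β) (P : FDist α) (g : β → ℝ) :
    ∑ b, (P.map f).pmf b * g b = ∑ a, P.pmf a * g (f a) := by
  simp_rw [map, Finset.sum_mul]
  rw [← Finset.sum_fiberwise Finset.univ f]
  refine Finset.sum_congr rfl fun b _ => Finset.sum_congr rfl fun a ha => ?_
  rw [(Finset.mem_filter.1 ha).2]

lemma sum_prod_mul (P : FDist α) (Q : FDist β) (g : α × β → ℝ) :
    ∑ p, (P.prod Q).pmf p * g p = ∑ a, ∑ b, P.pmf a * Q.pmf b * g (a, b) :=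
  Fintype.sum_prod_type _

lemma sd_uniform_zmod_two (D : FDist (ZMod 2)) :
    D.sd (uniform (ZMod 2)) = |∑ b, D.pmf b * signChar b| / 2 := by
  have h01 : D.pmf 0 + D.pmf 1 = 1 := by rw [← sum_zmod_two, D.sum_one]
  have hu (b : ZMod 2) : (uniform (ZMod 2)).pmf b = 1 / 2 := by simp [uniform]
  simp only [sd, sum_zmod_two, hu, AddChar.map_zero_eq_one, signChar_one]
  rw [show D.pmf 0 - 1 / 2 = (D.pmf 0 - D.pmf 1) / 2 by linarith,
    show D.pmf 1 - 1 / 2 = -((D.pmf 0 - D.pmf 1) / 2) by linarith, abs_neg, abs_div,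
    abs_two]
  ring_nf

end FDist

lemma two_rpow_neg_le_sq_half {ε t : ℝ} (hε : 0 < ε) (h : 2 + 2 * Real.logb 2 (1 / ε) ≤ t) :
    (2 : ℝ) ^ (-t) ≤ (ε / 2) ^ 2 := by
  rw [← Real.rpow_logb two_pos (by norm_num) (by positivity : (0 : ℝ) < (ε / 2) ^ 2)]
  refine Real.rpow_le_rpow_of_exponent_le one_le_two ?_
  rw [Real.logb_pow, Real.logb_div hε.ne' two_ne_zero, Real.logb_self_eq_one one_lt_two]
  rw [one_div, Real.logb_inv] at h
  push_cast
  linarith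

theorem stmt19 (n : ℕ) (k₁ k₂ ε : ℝ) (hε : 0 < ε)
    (X Y : FDist (Fin n → ZMod 2))
    (hX : X.minEntropyGe k₁) (hY : Y.minEntropyGe k₂)
    (hk : (n : ℝ) + 2 + 2 * Real.logb 2 (1/ε) ≤ k₁ + k₂) :
    FDist.sd (FDist.map (fun p => ∑ i, p.1 i * p.2 i) (X.prod Y))
      (FDist.uniform (ZMod 2)) ≤ ε := by
  set bias := ∑ x, ∑ y, X.pmf x * Y.pmf y * signChar (x ⬝ᵥ y)
  have hsd : FDist.sd (FDist.map (fun p => ∑ i, p.1 i * p.2 i) (X.prod Y))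
      (FDist.uniform (ZMod 2)) = |bias| / 2 := by
    rw [FDist.sd_uniform_zmod_two, FDist.sum_map_mul, FDist.sum_prod_mul]
    rfl
  have hbias : bias ^ 2 ≤ (ε / 2) ^ 2 :=
    calc bias ^ 2 ≤ 2 ^ n * (∑ x, X.pmf x ^ 2) * ∑ y, Y.pmf y ^ 2 :=
          sq_sum_mul_signChar_dotProduct_le _ _
      _ ≤ 2 ^ n * 2 ^ (-k₁) * 2 ^ (-k₂) := by
          gcongr
          exacts [X.sum_sq_le_of_minEntropyGe hX, Y.sum_sq_le_of_minEntropyGe hY]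
      _ = 2 ^ (-(k₁ + k₂ - n)) := by
          rw [neg_sub, sub_eq_add_neg, Real.rpow_add two_pos, Real.rpow_natCast, neg_add,
            Real.rpow_add two_pos, mul_assoc]
      _ ≤ (ε / 2) ^ 2 := two_rpow_neg_le_sq_half hε (by linarith)
  rw [hsd]
  linarith [abs_le_of_sq_le_sq hbias (by positivity)]
end
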